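/- Let V be a finite-dimensional real vector space with a nondegenerate symmetric bilinear form b, and let θ₁, θ₂ : V → V be two Cartan involutions of b, i.e. linear involutions such that (x,y) ↦ b(x, θⱼ(y)) is a positive-definite inner product on V for j = 1, 2. Then there exists an element A in the identity component of the orthogonal group O(b) = {A ∈ GL(V) : b(A x, A y) = b(x,y) for all x,y ∈ V} such that A ∘ θ₁ ∘ A⁻¹ = θ₂. -/

import Mathlib

/-!
For the inner product `⟪x, y⟫ = b x (θ₁ y)`, the operator `P = θ₁ θ₂` is symmetric and positive
definite, and `θ₁ P θ₁ = P⁻¹`. Its real powers `P ^ t`, taken in an orthonormal eigenbasis, thus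
satisfy `θ₁ P ^ t θ₁ = P ^ (-t)`, which makes them `b`-orthogonal; they form a continuous path
through the identity, and `P ^ (-1/2)` conjugates `θ₁` to `P ^ (-1) θ₁ = θ₂`.
-/

/-- The (matrix-entry) topology on the group of linear automorphisms of a
finite-dimensional real vector space, induced by the entries of the matrix in a fixed
basis; this is the standard topology of `GL(V)`. -/
noncomputable def autTopology (V : Type*) [AddCommGroup V] [Module ℝ V]
    [FiniteDimensional ℝ V] : TopologicalSpace (V ≃ₗ[ℝ] V) :=
  TopologicalSpace.induced
    (fun e i j => (Module.finBasis ℝ V).repr (e (Module.finBasis ℝ V j)) i)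
    inferInstance

/-- `ψ` lies in the identity component of the subgroup `S` of `GL(V)` (with its subspace
topology). -/
def MemIdentityComponent (V : Type*) [AddCommGroup V] [Module ℝ V] [FiniteDimensional ℝ V]
    (S : Subgroup (V ≃ₗ[ℝ] V)) (ψ : V ≃ₗ[ℝ] V) : Prop :=
  letI := autTopology V
  ∃ h : ψ ∈ S, (⟨ψ, h⟩ : S) ∈ connectedComponent (1 : S)

/-- The subgroup of `GL(V)` preserving a given (not necessarily real-valued) pairing `b`. -/
def isometrySubgroup {V : Type*} [AddCommGroup V] [Module ℝ V] {α : Type*}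
    (b : V → V → α) : Subgroup (V ≃ₗ[ℝ] V) where
  carrier := {A | ∀ x y : V, b (A x) (A y) = b x y}
  one_mem' := fun _ _ => rfl
  mul_mem' := fun {a c} ha hc x y => (ha (c x) (c y)).trans (hc x y)
  inv_mem' := by
    intro a ha x y
    have h1 : a⁻¹ = a.symm := rfl
    rw [h1]
    conv_rhs => rw [← a.apply_symm_apply x, ← a.apply_symm_apply y]
    exact (ha (a.symm x) (a.symm y)).symm ▸ rfl

/-- The automorphism group of a real Lie algebra, as a subgroup of `GL(g)`. -/
def lieAutSubgroup (g : Type*) [LieRing g] [LieAlgebra ℝ g] :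
    Subgroup (g ≃ₗ[ℝ] g) where
  carrier := {A | ∀ x y : g, A ⁅x, y⁆ = ⁅A x, A y⁆}
  one_mem' := fun _ _ => rfl
  mul_mem' := fun {a c} ha hc x y => by
    show a (c ⁅x, y⁆) = ⁅a (c x), a (c y)⁆
    rw [hc, ha]
  inv_mem' := by
    intro a ha x y
    have h1 : a⁻¹ = a.symm := rfl
    rw [h1]
    apply a.injective
    rw [ha, a.apply_symm_apply, a.apply_symm_apply, a.apply_symm_apply]

/-- A Cartan involution of a nondegenerate symmetric real bilinear form `b` on `V`:
a linear involution `θ` such that `(x, y) ↦ b x (θ y)` is a positive-definite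
(symmetric) inner product on `V`. -/
def IsCartanInvolutionOfForm {V : Type*} [AddCommGroup V] [Module ℝ V]
    (b : LinearMap.BilinForm ℝ V) (θ : V →ₗ[ℝ] V) : Prop :=
  (∀ x, θ (θ x) = x) ∧ (∀ x y, b (θ x) y = b x (θ y)) ∧ ∀ x, x ≠ 0 → 0 < b x (θ x)


open scoped RealInnerProductSpace Topology

namespace LinearMap.IsSymmetric

variable {V : Type*} [NormedAddCommGroup V] [InnerProductSpace ℝ V] [FiniteDimensional ℝ V]
  {T : V →ₗ[ℝ] V} (hT : T.IsSymmetric)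

-- Only meaningful for positive definite `T`: `Real.rpow` of a negative eigenvalue is junk.
noncomputable def rpow (t : ℝ) : V →ₗ[ℝ] V :=
  Matrix.toLin (hT.eigenvectorBasis rfl).toBasis (hT.eigenvectorBasis rfl).toBasis
    (Matrix.diagonal fun i => hT.eigenvalues rfl i ^ t)

lemma rpow_apply_eigenvectorBasis (t : ℝ) (i : Fin (Module.finrank ℝ V)) :
    hT.rpow t (hT.eigenvectorBasis rfl i) =
      hT.eigenvalues rfl i ^ t • hT.eigenvectorBasis rfl i := by
  simpa [rpow, Matrix.diagonal_apply, ite_smul] using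
    Matrix.toLin_self (hT.eigenvectorBasis rfl).toBasis (hT.eigenvectorBasis rfl).toBasis
      (Matrix.diagonal fun i => hT.eigenvalues rfl i ^ t) i

lemma isSymmetric_rpow (t : ℝ) : (hT.rpow t).IsSymmetric :=
  (Matrix.isSymmetric_toLin_iff _).mpr (Matrix.isHermitian_diagonal_iff.mpr fun _ => rfl)

lemma rpow_zero : hT.rpow 0 = LinearMap.id := by
  simp [rpow, Matrix.toLin_one]

lemma rpow_one : hT.rpow 1 = T := by
  conv_rhs => rw [← Matrix.toLin_toMatrix (hT.eigenvectorBasis rfl).toBasis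
    (hT.eigenvectorBasis rfl).toBasis T, hT.toMatrix_eigenvectorBasis]
  simp [rpow]

lemma eigenvalues_pos (hpos : ∀ x, x ≠ 0 → 0 < ⟪T x, x⟫) (i : Fin (Module.finrank ℝ V)) :
    0 < hT.eigenvalues rfl i := by
  have := hpos _ ((hT.eigenvectorBasis rfl).orthonormal.ne_zero i)
  simpa [real_inner_smul_left] using this

lemma rpow_add (hpos : ∀ x, x ≠ 0 → 0 < ⟪T x, x⟫) (s t : ℝ) :
    hT.rpow (s + t) = hT.rpow s ∘ₗ hT.rpow t := by
  simp only [rpow, ← Matrix.toLin_mul, Matrix.diagonal_mul_diagonal,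
    Real.rpow_add (hT.eigenvalues_pos hpos _)]

lemma rpow_apply_of_apply_eq_smul {v : V} {c : ℝ} (hv : T v = c • v) (t : ℝ) :
    hT.rpow t v = c ^ t • v := by
  set e := hT.eigenvectorBasis rfl
  refine e.repr.injective (PiLp.ext fun i => ?_)
  have hi : hT.eigenvalues rfl i * e.repr v i = c * e.repr v i := by
    have := hT.eigenvectorBasis_apply_self_apply rfl v i
    rw [hv, map_smul] at this
    simpa using this.symm
  rw [e.repr_apply_apply, ← hT.isSymmetric_rpow, rpow_apply_eigenvectorBasis, map_smul,
    PiLp.smul_apply, e.repr_apply_apply, real_inner_smul_left, smul_eq_mul]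
  rcases mul_eq_mul_right_iff.mp hi with h | h
  · rw [h]
  · rw [← e.repr_apply_apply, h]; simp

lemma continuous_rpow_apply (hpos : ∀ x, x ≠ 0 → 0 < ⟪T x, x⟫) (v : V) :
    Continuous fun t => hT.rpow t v := by
  set e := hT.eigenvectorBasis rfl
  have hsum : ∀ t, hT.rpow t v = ∑ i, (e.repr v i * hT.eigenvalues rfl i ^ t) • e i := by
    intro t
    conv_lhs => rw [← e.sum_repr v]
    simp [e, rpow_apply_eigenvectorBasis, smul_smul]
  simp only [hsum]
  refine continuous_finsetSum _ fun i _ => ?_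
  exact (continuous_const.mul
    (Real.continuous_const_rpow (hT.eigenvalues_pos hpos i).ne')).smul continuous_const

lemma rpow_comp_eq_comp_rpow_neg (hpos : ∀ x, x ≠ 0 → 0 < ⟪T x, x⟫) {J : V →ₗ[ℝ] V}
    (hJ : T ∘ₗ J ∘ₗ T = J) (t : ℝ) : hT.rpow t ∘ₗ J = J ∘ₗ hT.rpow (-t) := by
  refine (hT.eigenvectorBasis rfl).toBasis.ext fun i => ?_
  have hμ := hT.eigenvalues_pos hpos i
  have hw : T (J (hT.eigenvectorBasis rfl i)) =
      (hT.eigenvalues rfl i)⁻¹ • J (hT.eigenvectorBasis rfl i) := by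
    have h := LinearMap.congr_fun hJ (hT.eigenvectorBasis rfl i)
    simp only [LinearMap.comp_apply, apply_eigenvectorBasis, map_smul] at h
    rw [eq_inv_smul_iff₀ hμ.ne']
    exact h
  rw [OrthonormalBasis.coe_toBasis, LinearMap.comp_apply, LinearMap.comp_apply,
    hT.rpow_apply_of_apply_eq_smul hw, rpow_apply_eigenvectorBasis, map_smul,
    Real.inv_rpow hμ.le, Real.rpow_neg hμ.le]

noncomputable def rpowEquiv (hpos : ∀ x, x ≠ 0 → 0 < ⟪T x, x⟫) (t : ℝ) : V ≃ₗ[ℝ] V :=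
  LinearEquiv.ofLinearMap (hT.rpow t) (hT.rpow (-t))
    (by rw [← hT.rpow_add hpos, add_neg_cancel, rpow_zero])
    (by rw [← hT.rpow_add hpos, neg_add_cancel, rpow_zero])

lemma rpowEquiv_zero (hpos : ∀ x, x ≠ 0 → 0 < ⟪T x, x⟫) : hT.rpowEquiv hpos 0 = 1 :=
  LinearEquiv.ext fun x => by simp [rpowEquiv, rpow_zero]

end LinearMap.IsSymmetric

section IdentityComponent

variable {V : Type*}

lemma continuous_autTopology_of_continuous_apply [NormedAddCommGroup V] [NormedSpace ℝ V]
    [FiniteDimensional ℝ V] {X : Type*} [TopologicalSpace X] {γ : X → V ≃ₗ[ℝ] V}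
    (hγ : ∀ v, Continuous fun x => γ x v) : Continuous[_, autTopology V] γ :=
  continuous_induced_rng.2 <| continuous_pi fun i => continuous_pi fun j =>
    ((Module.finBasis ℝ V).coord i).continuous_of_finiteDimensional.comp
      (hγ (Module.finBasis ℝ V j))

lemma memIdentityComponent_of_continuous [AddCommGroup V] [Module ℝ V] [FiniteDimensional ℝ V]
    {X : Type*} [TopologicalSpace X] [PreconnectedSpace X] {S : Subgroup (V ≃ₗ[ℝ] V)}
    {γ : X → V ≃ₗ[ℝ] V} (hγ : Continuous[_, autTopology V] γ) (hS : ∀ x, γ x ∈ S) {x₀ : X}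
    (h₀ : γ x₀ = 1) (x : X) : MemIdentityComponent V S (γ x) := by
  let := autTopology V
  refine ⟨hS x, (isPreconnected_range (hγ.subtype_mk hS)).subset_connectedComponent ?_
    (Set.mem_range_self x)⟩
  exact ⟨x₀, Subtype.ext h₀⟩

end IdentityComponent

section Cartan

variable {V : Type*}

@[reducible]
def IsCartanInvolutionOfForm.innerProductCore [AddCommGroup V] [Module ℝ V]
    {b : LinearMap.BilinForm ℝ V} (hbsymm : ∀ x y : V, b x y = b y x) {θ : V →ₗ[ℝ] V}
    (hθ : IsCartanInvolutionOfForm b θ) : InnerProductSpace.Core ℝ V where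
  inner x y := b x (θ y)
  conj_inner_symm x y := by
    simp only [starRingEnd_apply, star_trivial]
    rw [hbsymm y (θ x), hθ.2.1]
  re_inner_nonneg x := by
    rcases eq_or_ne x 0 with rfl | hx
    · simp
    · exact (hθ.2.2 x hx).le
  add_left := by simp
  smul_left := by simp
  definite x hx := by
    by_contra h
    exact (hθ.2.2 x h).ne' hx

variable [NormedAddCommGroup V] [InnerProductSpace ℝ V] {b : LinearMap.BilinForm ℝ V}
  {θ₁ θ₂ : V →ₗ[ℝ] V}

namespace IsCartanInvolutionOfForm

lemma isSymmetric_comp (h₁ : IsCartanInvolutionOfForm b θ₁) (h₂ : IsCartanInvolutionOfForm b θ₂)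
    (hinner : ∀ x y, b x (θ₁ y) = ⟪x, y⟫) : (θ₁ ∘ₗ θ₂).IsSymmetric := by
  intro x y
  simp only [LinearMap.comp_apply, ← hinner, h₁.2.1, h₁.1, h₂.2.1]

lemma inner_comp_apply_self_pos (h₁ : IsCartanInvolutionOfForm b θ₁)
    (h₂ : IsCartanInvolutionOfForm b θ₂) (hinner : ∀ x y, b x (θ₁ y) = ⟪x, y⟫) (x : V)
    (hx : x ≠ 0) : 0 < ⟪(θ₁ ∘ₗ θ₂) x, x⟫ := by
  rw [LinearMap.comp_apply, ← hinner, h₁.2.1, h₁.1, h₂.2.1]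
  exact h₂.2.2 x hx

variable [FiniteDimensional ℝ V]

lemma apply_rpow_eq_rpow_neg_apply (hθ₁ : ∀ x, θ₁ (θ₁ x) = x) (hθ₂ : ∀ x, θ₂ (θ₂ x) = x)
    (hP : (θ₁ ∘ₗ θ₂).IsSymmetric) (hpos : ∀ x, x ≠ 0 → 0 < ⟪(θ₁ ∘ₗ θ₂) x, x⟫) (t : ℝ) (x : V) :
    θ₁ (hP.rpow t x) = hP.rpow (-t) (θ₁ x) := by
  have hJ : (θ₁ ∘ₗ θ₂) ∘ₗ θ₁ ∘ₗ (θ₁ ∘ₗ θ₂) = θ₁ := by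
    ext x
    simp [hθ₁, hθ₂]
  simpa using (LinearMap.congr_fun (hP.rpow_comp_eq_comp_rpow_neg hpos hJ (-t)) x).symm

lemma rpowEquiv_mem_isometrySubgroup (h₁ : IsCartanInvolutionOfForm b θ₁)
    (hθ₂ : ∀ x, θ₂ (θ₂ x) = x) (hinner : ∀ x y, b x (θ₁ y) = ⟪x, y⟫)
    (hP : (θ₁ ∘ₗ θ₂).IsSymmetric) (hpos : ∀ x, x ≠ 0 → 0 < ⟪(θ₁ ∘ₗ θ₂) x, x⟫) (t : ℝ) :
    hP.rpowEquiv hpos t ∈ isometrySubgroup fun x y => b x y := by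
  have hb : ∀ u w, b u w = ⟪u, θ₁ w⟫ := fun u w => by rw [← hinner, h₁.1]
  intro x y
  calc b (hP.rpow t x) (hP.rpow t y) = ⟪hP.rpow t x, hP.rpow (-t) (θ₁ y)⟫ := by
        rw [hb, apply_rpow_eq_rpow_neg_apply h₁.1 hθ₂ hP hpos]
    _ = b x y := by
        rw [hP.isSymmetric_rpow, ← LinearMap.comp_apply, ← hP.rpow_add hpos, add_neg_cancel,
          hP.rpow_zero, LinearMap.id_apply, hb]

lemma exists_memIdentityComponent_conj_eq (h₁ : IsCartanInvolutionOfForm b θ₁)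
    (h₂ : IsCartanInvolutionOfForm b θ₂) (hinner : ∀ x y, b x (θ₁ y) = ⟪x, y⟫) :
    ∃ A : V ≃ₗ[ℝ] V, MemIdentityComponent V (isometrySubgroup fun x y => b x y) A ∧
      ∀ x, A (θ₁ (A.symm x)) = θ₂ x := by
  have hP := isSymmetric_comp h₁ h₂ hinner
  have hpos := inner_comp_apply_self_pos h₁ h₂ hinner
  have hθ₁ : ∀ x, θ₁ x = hP.rpow 1 (θ₂ x) := fun x => by
    rw [hP.rpow_one, LinearMap.comp_apply, h₂.1]
  refine ⟨hP.rpowEquiv hpos (-(1 / 2)), memIdentityComponent_of_continuous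
    (continuous_autTopology_of_continuous_apply (hP.continuous_rpow_apply hpos))
    (rpowEquiv_mem_isometrySubgroup h₁ h₂.1 hinner hP hpos) (hP.rpowEquiv_zero hpos) _,
    fun x => ?_⟩
  calc hP.rpow (-(1 / 2)) (θ₁ (hP.rpow (-(-(1 / 2))) x))
      = hP.rpow (-(1 / 2) + -(1 / 2) + 1) (θ₂ x) := by
        rw [apply_rpow_eq_rpow_neg_apply h₁.1 h₂.1 hP hpos, neg_neg, hθ₁, hP.rpow_add hpos,
          hP.rpow_add hpos]
        rfl
    _ = θ₂ x := by norm_num [hP.rpow_zero]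

end IsCartanInvolutionOfForm

end Cartan

theorem cartanInvolutions_conjugate_identityComponent_general {V : Type*} [AddCommGroup V]
    [Module ℝ V] [FiniteDimensional ℝ V] (b : LinearMap.BilinForm ℝ V)
    (hbsymm : ∀ x y : V, b x y = b y x)
    (θ₁ θ₂ : V →ₗ[ℝ] V) (h₁ : IsCartanInvolutionOfForm b θ₁)
    (h₂ : IsCartanInvolutionOfForm b θ₂) :
    ∃ A : V ≃ₗ[ℝ] V,
      MemIdentityComponent V (isometrySubgroup fun x y => b x y) A ∧
      ∀ x : V, A (θ₁ (A.symm x)) = θ₂ x := by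
  let core := h₁.innerProductCore hbsymm
  let : NormedAddCommGroup V := core.toNormedAddCommGroup
  let : InnerProductSpace ℝ V := InnerProductSpace.ofCore core.toCore
  exact h₁.exists_memIdentityComponent_conj_eq h₂ fun _ _ => rfl

/-- Any two Cartan involutions of a nondegenerate symmetric bilinear form
`b` on a finite-dimensional real vector space are conjugate by an element of the identity
component of the orthogonal group `O(b)`. -/
theorem cartanInvolutions_conjugate_identityComponent {V : Type*} [AddCommGroup V]
    [Module ℝ V] [FiniteDimensional ℝ V] (b : LinearMap.BilinForm ℝ V)
    (hbsymm : ∀ x y : V, b x y = b y x) (hbnd : b.Nondegenerate)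
    (θ₁ θ₂ : V →ₗ[ℝ] V) (h₁ : IsCartanInvolutionOfForm b θ₁)
    (h₂ : IsCartanInvolutionOfForm b θ₂) :
    ∃ A : V ≃ₗ[ℝ] V,
      MemIdentityComponent V (isometrySubgroup fun x y => b x y) A ∧
      ∀ x : V, A (θ₁ (A.symm x)) = θ₂ x :=
  cartanInvolutions_conjugate_identityComponent_general b hbsymm θ₁ θ₂ h₁ h₂
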